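/- A bigraph H is a cocomparability bigraph if and only if the reflexive graph H^{++} is a strong cocomparability graph. -/

import Mathlib

/-!
Common definitions.  A reflexive graph on a finite vertex type `V` is given by a
symmetric, reflexive adjacency relation `adj : V → V → Prop`; the edge set consists
of all pairs (including loops `v v`) with `adj u v`.
-/

variable {V : Type*}

/-- `G` is a strong cocomparability graph: there is a linear (strict total) order on the
vertices such that the correspondingly ordered adjacency matrix contains no `Slash`
submatrix (rows `01`, `10`). -/
def IsStrongCocomp (adj : V → V → Prop) : Prop :=
  ∃ lt : V → V → Prop, IsStrictTotalOrder V lt ∧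
    ∀ u v x y : V, lt u v → lt x y →
      ¬(¬ adj u x ∧ adj u y ∧ adj v x ∧ ¬ adj v y)

/-- `G` is a cocomparability graph: it has a cocomparability ordering. -/
def IsCocomp (adj : V → V → Prop) : Prop :=
  ∃ lt : V → V → Prop, IsStrictTotalOrder V lt ∧
    ∀ x y z : V, lt x y → lt y z → adj x z → adj x y ∨ adj y z

/-- `(u,v)` forces `(u',v')`:  either the pairs are equal, or `uu', vv'` are edges and
`uv', vu'` are non-edges. -/
def Forces (adj : V → V → Prop) (p q : V × V) : Prop :=
  p = q ∨ (adj p.1 q.1 ∧ adj p.2 q.2 ∧ ¬ adj p.1 q.2 ∧ ¬ adj p.2 q.1)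

/-- `(u,v)` implies `(u',v')`: there are walks `u_0 … u_k` and `v_0 … v_k` (on pairs of
distinct vertices) with `(u_0,v_0) = (u,v)`, `(u_k,v_k) = (u',v')` and each pair forcing
the next. -/
def ImpliesRel (adj : V → V → Prop) (p q : V × V) : Prop :=
  ∃ (k : ℕ) (u v : ℕ → V),
    (u 0, v 0) = p ∧ (u k, v k) = q ∧
    (∀ i < k, adj (u i) (u (i+1))) ∧
    (∀ i < k, adj (v i) (v (i+1))) ∧
    (∀ i ≤ k, u i ≠ v i) ∧
    (∀ i < k, Forces adj (u i, v i) (u (i+1), v (i+1)))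

/-- An invertible pair: distinct vertices `u, v` with `(u,v) ~ (v,u)`. -/
def InvertiblePair (adj : V → V → Prop) (u v : V) : Prop :=
  u ≠ v ∧ ImpliesRel adj (u, v) (v, u)

/-- The ordered quadruple `a b c d` is (ignoring loops) an induced 4-cycle. -/
def IsC4 (adj : V → V → Prop) (a b c d : V) : Prop :=
  adj a b ∧ adj b c ∧ adj c d ∧ adj d a ∧ ¬ adj a c ∧ ¬ adj b d

/-- The ordered quadruple `a b c d` is (ignoring loops) an induced path on 4 vertices. -/
def IsP4 (adj : V → V → Prop) (a b c d : V) : Prop :=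
  adj a b ∧ adj b c ∧ adj c d ∧ ¬ adj a c ∧ ¬ adj a d ∧ ¬ adj b d

/-- The ordered quadruple `a b c d` is (ignoring loops) an induced `2K_2`
(edges `ab` and `cd` only). -/
def Is2K2 (adj : V → V → Prop) (a b c d : V) : Prop :=
  adj a b ∧ adj c d ∧ ¬ adj a c ∧ ¬ adj a d ∧ ¬ adj b c ∧ ¬ adj b d

/-- The four vertices `a, b, c, d` are distinct and the set `{a,b,c,d}` induces a `C4`. -/
def InducesC4 (adj : V → V → Prop) (a b c d : V) : Prop :=
  [a, b, c, d].Nodup ∧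
    ∃ p q r s : V, ({p, q, r, s} : Set V) = {a, b, c, d} ∧ IsC4 adj p q r s

/-- The four vertices `a, b, c, d` are distinct and the set `{a,b,c,d}` induces a `P4`. -/
def InducesP4 (adj : V → V → Prop) (a b c d : V) : Prop :=
  [a, b, c, d].Nodup ∧
    ∃ p q r s : V, ({p, q, r, s} : Set V) = {a, b, c, d} ∧ IsP4 adj p q r s

/-- The four vertices `a, b, c, d` are distinct and the set `{a,b,c,d}` induces a `2K2`. -/
def Induces2K2 (adj : V → V → Prop) (a b c d : V) : Prop :=
  [a, b, c, d].Nodup ∧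
    ∃ p q r s : V, ({p, q, r, s} : Set V) = {a, b, c, d} ∧ Is2K2 adj p q r s

/-- The edge `uu'` avoids the edge `vv'` (both possibly loops, with
`{u,u'} ∩ {v,v'} = ∅`). -/
def Avoids (adj : V → V → Prop) (u u' v v' : V) : Prop :=
  (u ≠ v ∧ u ≠ v' ∧ u' ≠ v ∧ u' ≠ v') ∧
  ((u = u' ∧ v = v' ∧ ¬ adj u v) ∨
   (u = u' ∧ v ≠ v' ∧ ¬ adj u v ∧ ¬ adj u v') ∨
   (u ≠ u' ∧ v = v' ∧ ¬ adj u v ∧ ¬ adj u' v) ∨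
   (u ≠ u' ∧ v ≠ v' ∧
     (Induces2K2 adj u u' v v' ∨ InducesP4 adj u u' v v' ∨ InducesC4 adj u u' v v')))

/-- `w 0, w 1, …, w t` is a walk in `G`. -/
def IsWalkOn (adj : V → V → Prop) (t : ℕ) (w : ℕ → V) : Prop :=
  ∀ i < t, adj (w i) (w (i+1))

/-- The edge `xy` avoids every edge of the walk `w 0, …, w t`. -/
def EdgeAvoidsWalk (adj : V → V → Prop) (x y : V) (t : ℕ) (w : ℕ → V) : Prop :=
  ∀ i < t, Avoids adj x y (w i) (w (i+1))

/-- A weak edge-asteroid: edges `x_i y_i`, `i ∈ ZMod (2k+1)`, such that each `x_i y_i`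
avoids a walk beginning with the edge `x_{i+k} y_{i+k}` and ending with the edge
`x_{i+k+1} y_{i+k+1}`. -/
def WeakEdgeAsteroid (adj : V → V → Prop) (k : ℕ) (x y : ZMod (2*k+1) → V) : Prop :=
  (∀ i, adj (x i) (y i)) ∧
  ∀ i : ZMod (2*k+1), ∃ (t : ℕ) (w : ℕ → V), 1 ≤ t ∧
    IsWalkOn adj t w ∧
    ((w 0 = x (i + (k : ZMod (2*k+1))) ∧ w 1 = y (i + (k : ZMod (2*k+1)))) ∨
     (w 0 = y (i + (k : ZMod (2*k+1))) ∧ w 1 = x (i + (k : ZMod (2*k+1))))) ∧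
    ((w (t-1) = x (i + (k : ZMod (2*k+1)) + 1) ∧ w t = y (i + (k : ZMod (2*k+1)) + 1)) ∨
     (w (t-1) = y (i + (k : ZMod (2*k+1)) + 1) ∧ w t = x (i + (k : ZMod (2*k+1)) + 1))) ∧
    EdgeAvoidsWalk adj (x i) (y i) t w

/-- An asteroid: vertices `x_i`, `i ∈ ZMod (2k+1)`, such that for each `i` there is a walk
connecting `x_{i+k}` and `x_{i+k+1}` containing no neighbour of `x_i`. -/
def Asteroid (adj : V → V → Prop) (k : ℕ) (x : ZMod (2*k+1) → V) : Prop :=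
  ∀ i : ZMod (2*k+1), ∃ (t : ℕ) (w : ℕ → V),
    w 0 = x (i + (k : ZMod (2*k+1))) ∧ w t = x (i + (k : ZMod (2*k+1)) + 1) ∧
    IsWalkOn adj t w ∧
    ∀ j ≤ t, ¬ adj (x i) (w j)

/-- A bigraph with biadjacency relation `A` is a cocomparability bigraph: its biadjacency
matrix has a `Slash`-free ordering. -/
def IsCocompBigraph {X Y : Type*} (A : X → Y → Prop) : Prop :=
  ∃ (ltX : X → X → Prop) (ltY : Y → Y → Prop),
    IsStrictTotalOrder X ltX ∧ IsStrictTotalOrder Y ltY ∧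
    ∀ x1 x2 y1 y2, ltX x1 x2 → ltY y1 y2 →
      ¬(¬ A x1 y1 ∧ A x1 y2 ∧ A x2 y1 ∧ ¬ A x2 y2)

/-- The edge set of `G` (as unordered pairs, including loops). -/
def GEdgeSet (adj : V → V → Prop) : Set (Sym2 V) := {e | ∃ u v, e = s(u, v) ∧ adj u v}

/-- Adjacency in the avoidance graph `G*`: two edges of `G` are adjacent iff they avoid
each other. -/
def AdjStar (adj : V → V → Prop) (e f : Sym2 V) : Prop :=
  ∃ u u' v v', e = s(u, u') ∧ f = s(v, v') ∧ Avoids adj u u' v v'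

/-!
A Slash in `H⁺⁺` needs two non-adjacent pairs, and non-adjacent vertices of `H⁺⁺` lie in
different colour classes. Ordering `X` before `Y`, this forces both rows of the Slash into one
class and both columns into the other, so it is a Slash of the biadjacency matrix of `H` or of
its transpose. Conversely, the biadjacency matrix of `H` is a submatrix of that of `H⁺⁺`.
-/

section

variable {R C R' C' X Y : Type*}

def SlashFree (ltR : R → R → Prop) (ltC : C → C → Prop) (M : R → C → Prop) : Prop :=
  ∀ r₁ r₂ c₁ c₂, ltR r₁ r₂ → ltC c₁ c₂ → ¬(¬ M r₁ c₁ ∧ M r₁ c₂ ∧ M r₂ c₁ ∧ ¬ M r₂ c₂)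

theorem isCocompBigraph_iff (A : X → Y → Prop) :
    IsCocompBigraph A ↔ ∃ (ltX : X → X → Prop) (ltY : Y → Y → Prop),
      IsStrictTotalOrder X ltX ∧ IsStrictTotalOrder Y ltY ∧ SlashFree ltX ltY A :=
  Iff.rfl

theorem isStrongCocomp_iff (adj : V → V → Prop) :
    IsStrongCocomp adj ↔ ∃ lt : V → V → Prop, IsStrictTotalOrder V lt ∧ SlashFree lt lt adj :=
  Iff.rfl

namespace SlashFree

variable {ltR : R → R → Prop} {ltC : C → C → Prop} {M : R → C → Prop}

theorem comap (h : SlashFree ltR ltC M) (f : R' → R) (g : C' → C) :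
    SlashFree (f ⁻¹'o ltR) (g ⁻¹'o ltC) (fun a b => M (f a) (g b)) :=
  fun _ _ _ _ h₁ h₂ => h _ _ _ _ h₁ h₂

theorem transpose (h : SlashFree ltR ltC M) : SlashFree ltC ltR (flip M) :=
  fun c₁ c₂ r₁ r₂ hc hr ⟨h₁, h₂, h₃, h₄⟩ => h r₁ r₂ c₁ c₂ hr hc ⟨h₁, h₃, h₂, h₄⟩

end SlashFree

def plusPlus (A : X → Y → Prop) : X ⊕ Y → X ⊕ Y → Prop
  | .inl x, .inr y | .inr y, .inl x => A x y
  | _, _ => True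

theorem SlashFree.sumLex_plusPlus {ltX : X → X → Prop} {ltY : Y → Y → Prop} {A : X → Y → Prop}
    (h : SlashFree ltX ltY A) :
    SlashFree (Sum.Lex ltX ltY) (Sum.Lex ltX ltY) (plusPlus A) := by
  rintro (u | u) (v | v) (x | x) (y | y) huv hxy hslash
  all_goals first
    | exact h u v x y (Sum.lex_inl_inl.1 huv) (Sum.lex_inr_inr.1 hxy) hslash
    | exact h.transpose u v x y (Sum.lex_inr_inr.1 huv) (Sum.lex_inl_inl.1 hxy) hslash
    | simp_all [plusPlus]

theorem isStrictTotalOrder_sumLex (ltX : X → X → Prop) (ltY : Y → Y → Prop)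
    [IsStrictTotalOrder X ltX] [IsStrictTotalOrder Y ltY] :
    IsStrictTotalOrder (X ⊕ Y) (Sum.Lex ltX ltY) :=
  have : IsStrictOrder (X ⊕ Y) (Sum.Lex ltX ltY) := {}
  {}

end

theorem cocompBigraph_iff_plusPlus_strongCocomp
    {X Y : Type*} (A : X → Y → Prop) :
    IsCocompBigraph A ↔
      IsStrongCocomp (fun p q : X ⊕ Y =>
        match p, q with
        | Sum.inl _, Sum.inl _ => True
        | Sum.inr _, Sum.inr _ => True
        | Sum.inl x, Sum.inr y => A x y
        | Sum.inr y, Sum.inl x => A x y) := by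
  suffices h : IsCocompBigraph A ↔ IsStrongCocomp (plusPlus A) by
    -- `change` fails: the statement's `match` and `plusPlus` agree only case by case
    convert h using 2
    funext p q
    rcases p with _ | _ <;> rcases q with _ | _ <;> rfl
  rw [isCocompBigraph_iff, isStrongCocomp_iff]
  constructor
  · rintro ⟨ltX, ltY, hX, hY, hA⟩
    exact ⟨Sum.Lex ltX ltY, isStrictTotalOrder_sumLex ltX ltY, hA.sumLex_plusPlus⟩
  · rintro ⟨lt, hlt, hfree⟩
    exact ⟨Sum.inl ⁻¹'o lt, Sum.inr ⁻¹'o lt,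
      (RelEmbedding.preimage ⟨Sum.inl, Sum.inl_injective⟩ lt).isStrictTotalOrder,
      (RelEmbedding.preimage ⟨Sum.inr, Sum.inr_injective⟩ lt).isStrictTotalOrder,
      hfree.comap Sum.inl Sum.inr⟩
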